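/- Doubling property of matrix reverse Hölder weights: Let n, d ≥ 1 be integers and 1 < p < ∞. If V is a matrix weight on ℝⁿ belonging to 𝓑_p with constant C_V, then V defines a doubling measure: there exists γ > 0 depending only on n, p and C_V such that for every x ∈ ℝⁿ and every r > 0, ∫_{Q(x,2r)} V(y) dy ≤ γ ∫_{Q(x,r)} V(y) dy in the positive semidefinite order. -/

import Mathlib

open MeasureTheory
open scoped ComplexOrder

noncomputable section

/-- The open cube in `ℝⁿ` centered at `x` with half side length `r` (side length `2r`). -/
def cube {n : ℕ} (x : Fin n → ℝ) (r : ℝ) : Set (Fin n → ℝ) :=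
  {y | ∀ i, |y i - x i| < r}

/-- Entrywise integral of a real matrix-valued function over a set. -/
def matInt {n d : ℕ} (V : (Fin n → ℝ) → Matrix (Fin d) (Fin d) ℝ)
    (s : Set (Fin n → ℝ)) : Matrix (Fin d) (Fin d) ℝ :=
  Matrix.of fun i j => ∫ y in s, V y i j

/-- Entrywise average of a real matrix-valued function over a set. -/
def matAvg {n d : ℕ} (V : (Fin n → ℝ) → Matrix (Fin d) (Fin d) ℝ)
    (s : Set (Fin n → ℝ)) : Matrix (Fin d) (Fin d) ℝ :=
  Matrix.of fun i j => ⨍ y in s, V y i j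

/-- The quadratic form `⟨A e, e⟩`. -/
def qf {d : ℕ} (A : Matrix (Fin d) (Fin d) ℝ) (e : Fin d → ℝ) : ℝ :=
  dotProduct e (A.mulVec e)

/-- Squared Euclidean norm of a real vector. -/
def vnormSq {d : ℕ} (e : Fin d → ℝ) : ℝ := ∑ i, e i ^ 2

/-- The Euclidean operator norm of a real square matrix (its largest singular value). -/
def matOpNorm {d : ℕ} (A : Matrix (Fin d) (Fin d) ℝ) : ℝ :=
  sSup {t : ℝ | ∃ e : Fin d → ℝ, vnormSq e = 1 ∧ t = Real.sqrt (vnormSq (A.mulVec e))}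

/-- `V` is a matrix weight: measurable, a.e. symmetric positive semidefinite, and with
locally integrable operator norm. -/
def IsMatrixWeight {n d : ℕ} (V : (Fin n → ℝ) → Matrix (Fin d) (Fin d) ℝ) : Prop :=
  (∀ i j, Measurable fun x => V x i j) ∧
  (∀ᵐ (x : Fin n → ℝ) ∂volume, (V x).PosSemidef) ∧
  ∀ (x : Fin n → ℝ) (r : ℝ), 0 < r → IntegrableOn (fun y => matOpNorm (V y)) (cube x r)

/-- The matrix reverse Hölder class `𝓑_p` with constant `C`. -/
def MemBp {n d : ℕ} (p C : ℝ) (V : (Fin n → ℝ) → Matrix (Fin d) (Fin d) ℝ) : Prop :=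
  (∀ (x : Fin n → ℝ) (r : ℝ), 0 < r →
    IntegrableOn (fun y => matOpNorm (V y) ^ p) (cube x r)) ∧
  ∀ (x : Fin n → ℝ) (r : ℝ), 0 < r → ∀ e : Fin d → ℝ,
    (⨍ y in cube x r, qf (V y) e ^ p) ^ (1 / p) ≤ C * qf (matAvg V (cube x r)) e

/-- The scalar reverse Hölder class `B_p` with constant `C`. -/
def MemBpScalar {n : ℕ} (p C : ℝ) (v : (Fin n → ℝ) → ℝ) : Prop :=
  (∀ (x : Fin n → ℝ) (r : ℝ), 0 < r → IntegrableOn (fun y => v y ^ p) (cube x r)) ∧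
  ∀ (x : Fin n → ℝ) (r : ℝ), 0 < r →
    (⨍ y in cube x r, v y ^ p) ^ (1 / p) ≤ C * ⨍ y in cube x r, v y

/-- The averaged matrix `Ψ(x,r;V) = r^{2-n} ∫_{Q(x,r)} V`. -/
def Psi {n d : ℕ} (x : Fin n → ℝ) (r : ℝ)
    (V : (Fin n → ℝ) → Matrix (Fin d) (Fin d) ℝ) : Matrix (Fin d) (Fin d) ℝ :=
  r ^ ((2 : ℝ) - n) • matInt V (cube x r)

/-- The nondegeneracy class `ND`. -/
def MemND {n d : ℕ} (V : (Fin n → ℝ) → Matrix (Fin d) (Fin d) ℝ) : Prop :=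
  ∀ E : Set (Fin n → ℝ), MeasurableSet E → 0 < volume E → (matInt V E).PosDef

/-- The set of radii used to define the lower auxiliary function. -/
def lowerSet {n d : ℕ} (V : (Fin n → ℝ) → Matrix (Fin d) (Fin d) ℝ)
    (x : Fin n → ℝ) : Set ℝ :=
  {r : ℝ | 0 < r ∧ ∃ e : Fin d → ℝ, vnormSq e = 1 ∧ qf (Psi x r V) e ≤ 1}

/-- The lower auxiliary function `m̲(x,V)`. -/
def mLower {n d : ℕ} (V : (Fin n → ℝ) → Matrix (Fin d) (Fin d) ℝ) (x : Fin n → ℝ) : ℝ :=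
  (sSup (lowerSet V x))⁻¹

/-- The set of radii used to define the upper auxiliary function. -/
def upperSet {n d : ℕ} (V : (Fin n → ℝ) → Matrix (Fin d) (Fin d) ℝ)
    (x : Fin n → ℝ) : Set ℝ :=
  {r : ℝ | 0 < r ∧ matOpNorm (Psi x r V) ≤ 1}

/-- The upper auxiliary function `m̄(x,V)`. -/
def mUpper {n d : ℕ} (V : (Fin n → ℝ) → Matrix (Fin d) (Fin d) ℝ) (x : Fin n → ℝ) : ℝ :=
  (sSup (upperSet V x))⁻¹

/-- The set of radii used to define the scalar auxiliary function. -/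
def scalSet {n : ℕ} (v : (Fin n → ℝ) → ℝ) (x : Fin n → ℝ) : Set ℝ :=
  {r : ℝ | 0 < r ∧ r ^ ((2 : ℝ) - n) * ∫ y in cube x r, v y ≤ 1}

/-- The scalar auxiliary function `m(x,v)`. -/
def mScal {n : ℕ} (v : (Fin n → ℝ) → ℝ) (x : Fin n → ℝ) : ℝ :=
  (sSup (scalSet v x))⁻¹

/-- The positive semidefinite square root of a matrix (junk value `0` off the
positive semidefinite matrices). -/
def msqrt {d : ℕ} (A : Matrix (Fin d) (Fin d) ℝ) : Matrix (Fin d) (Fin d) ℝ :=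
  @dite _ A.PosSemidef (Classical.dec _) (fun h => (h.1.eigenvectorUnitary : Matrix (Fin d) (Fin d) ℝ) *
    Matrix.diagonal ((RCLike.ofReal (K := ℝ)) ∘ Real.sqrt ∘ h.1.eigenvalues) *
    (star h.1.eigenvectorUnitary : Matrix (Fin d) (Fin d) ℝ)) fun _ => 0

/-- The noncommutativity class `NC` with constant `N`. -/
def MemNC {n d : ℕ} (N : ℝ) (V : (Fin n → ℝ) → Matrix (Fin d) (Fin d) ℝ) : Prop :=
  ∀ (x : Fin n → ℝ) (e : Fin d → ℝ),
    N * vnormSq e ≤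
      ∫ y in cube x (mLower V x)⁻¹,
        qf (msqrt (V y) * (matInt V (cube x (mLower V x)⁻¹))⁻¹ * msqrt (V y)) e

/-- The matrix `𝓐_∞` class. -/
def MemAinf {n d : ℕ} (V : (Fin n → ℝ) → Matrix (Fin d) (Fin d) ℝ) : Prop :=
  ∀ ε : ℝ, 0 < ε → ∃ δ : ℝ, 0 < δ ∧ ∀ (x : Fin n → ℝ) (r : ℝ), 0 < r →
    ENNReal.ofReal (1 - ε) * volume (cube x r) ≤
      volume {y ∈ cube x r | (V y - δ • matAvg V (cube x r)).PosSemidef}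

/-- The smallest eigenvalue of a symmetric matrix (as the infimum of the Rayleigh
quotient over the unit sphere). -/
def lam1 {d : ℕ} (A : Matrix (Fin d) (Fin d) ℝ) : ℝ :=
  sInf {t : ℝ | ∃ e : Fin d → ℝ, vnormSq e = 1 ∧ t = qf A e}

/-- Squared Frobenius norm of the Jacobian matrix `Du(x)`. -/
def jacFrobSq {n d : ℕ} (u : (Fin n → ℝ) → Fin d → ℝ) (x : Fin n → ℝ) : ℝ :=
  ∑ j, ∑ i, (fderiv ℝ u x (Pi.single i 1) j) ^ 2

/-! ### Complex (Hermitian) versions -/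

/-- The (real-valued) quadratic form `⟨A e, e⟩` of a Hermitian matrix. -/
def qfC {d : ℕ} (A : Matrix (Fin d) (Fin d) ℂ) (e : Fin d → ℂ) : ℝ :=
  (dotProduct (star e) (A.mulVec e)).re

/-- Squared Euclidean norm of a complex vector. -/
def vnormSqC {d : ℕ} (e : Fin d → ℂ) : ℝ := ∑ i, Complex.normSq (e i)

/-- Entrywise integral of a complex matrix-valued function over a set. -/
def matIntC {n d : ℕ} (V : (Fin n → ℝ) → Matrix (Fin d) (Fin d) ℂ)
    (s : Set (Fin n → ℝ)) : Matrix (Fin d) (Fin d) ℂ :=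
  Matrix.of fun i j => ∫ y in s, V y i j

/-- Entrywise average of a complex matrix-valued function over a set. -/
def matAvgC {n d : ℕ} (V : (Fin n → ℝ) → Matrix (Fin d) (Fin d) ℂ)
    (s : Set (Fin n → ℝ)) : Matrix (Fin d) (Fin d) ℂ :=
  Matrix.of fun i j => ⨍ y in s, V y i j

/-- The Euclidean operator norm of a complex square matrix. -/
def matOpNormC {d : ℕ} (A : Matrix (Fin d) (Fin d) ℂ) : ℝ :=
  sSup {t : ℝ | ∃ e : Fin d → ℂ, vnormSqC e = 1 ∧ t = Real.sqrt (vnormSqC (A.mulVec e))}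

/-- `V` is a Hermitian matrix weight. -/
def IsHermWeight {n d : ℕ} (V : (Fin n → ℝ) → Matrix (Fin d) (Fin d) ℂ) : Prop :=
  (∀ i j, Measurable fun x => V x i j) ∧
  (∀ᵐ (x : Fin n → ℝ) ∂volume, (V x).PosSemidef) ∧
  ∀ (x : Fin n → ℝ) (r : ℝ), 0 < r → IntegrableOn (fun y => matOpNormC (V y)) (cube x r)

/-- The nondegeneracy class `ND` for Hermitian weights. -/
def MemNDC {n d : ℕ} (V : (Fin n → ℝ) → Matrix (Fin d) (Fin d) ℂ) : Prop :=
  ∀ E : Set (Fin n → ℝ), MeasurableSet E → 0 < volume E → (matIntC V E).PosDef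

/-- The matrix `𝓐_∞` class for Hermitian weights. -/
def MemAinfC {n d : ℕ} (V : (Fin n → ℝ) → Matrix (Fin d) (Fin d) ℂ) : Prop :=
  ∀ ε : ℝ, 0 < ε → ∃ δ : ℝ, 0 < δ ∧ ∀ (x : Fin n → ℝ) (r : ℝ), 0 < r →
    ENNReal.ofReal (1 - ε) * volume (cube x r) ≤
      volume {y ∈ cube x r | (V y - δ • matAvgC V (cube x r)).PosSemidef}

/-- The geometric average `exp(⨍_s ln w)` of a nonnegative function, with the
conventions `ln 0 = -∞` and `exp (-∞) = 0`. -/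
def geomMean {n : ℕ} (w : (Fin n → ℝ) → ℝ) (s : Set (Fin n → ℝ)) : ℝ :=
  @ite _ ((∀ᵐ y ∂(volume.restrict s), 0 < w y) ∧
      IntegrableOn (fun y => Real.log (w y)) s) (Classical.dec _)
    (Real.exp (⨍ y in s, Real.log (w y))) 0

/-- The scalar `A_∞` class. -/
def ScalarAinf {n : ℕ} (w : (Fin n → ℝ) → ℝ) : Prop :=
  ∀ ε : ℝ, 0 < ε → ∃ δ : ℝ, 0 < δ ∧ ∀ (x : Fin n → ℝ) (r : ℝ), 0 < r →
    ENNReal.ofReal (1 - ε) * volume (cube x r) ≤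
      volume {y ∈ cube x r | δ * ⨍ z in cube x r, w z ≤ w y}

end

/-!
Fix `e ∈ ℝᵈ`; then `w = ⟨V e, e⟩` is a nonnegative scalar weight satisfying the reverse Hölder
inequality with constant `C_V` on every cube. Hölder's inequality on a subset `E` of a cube `Q`,
followed by the reverse Hölder inequality on `Q`, gives `∫_E w ≤ C_V (|E|/|Q|)^{1/q} ∫_Q w`, where
`q` is the conjugate exponent of `p`. Taking for `E` the shell `Q(x,(1+δ)s) \ Q(x,s)`, whose
relative measure is at most `nδ`, and `δ` so small that `C_V (nδ)^{1/q} ≤ 1/2`, yields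
`∫_{Q(x,(1+δ)s)} w ≤ 2 ∫_{Q(x,s)} w`. Iterating `m` times with `(1+δ)^m ≥ 2` gives the doubling
constant `2^m`, which depends only on `n`, `p` and `C_V`, not on `e`.
-/

theorem pow_sub_pow_le_mul_pow {a b δ : ℝ} (ha : 0 ≤ a) (hab : a ≤ b) (hδ : b - a ≤ δ * b)
    (n : ℕ) : b ^ n - a ^ n ≤ n * δ * b ^ n := by
  induction n with
  | zero => simp
  | succ n ih =>
    have hpow : a ^ n ≤ b ^ n := pow_le_pow_left₀ ha hab n
    calc b ^ (n + 1) - a ^ (n + 1) = b * (b ^ n - a ^ n) + a ^ n * (b - a) := by ring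
      _ ≤ b * (n * δ * b ^ n) + b ^ n * (δ * b) := by
          gcongr
          · linarith
          · exact pow_nonneg (ha.trans hab) n
      _ = (n + 1 : ℕ) * δ * b ^ (n + 1) := by push_cast; ring

theorem le_pow_mul_of_forall_le_mul {f : ℝ → ℝ} {a c : ℝ} (ha : 0 < a) (hc : 0 ≤ c)
    (h : ∀ s, 0 < s → f (a * s) ≤ c * f s) {r : ℝ} (hr : 0 < r) (m : ℕ) :
    f (a ^ m * r) ≤ c ^ m * f r := by
  induction m with
  | zero => simp
  | succ m ih =>
    calc f (a ^ (m + 1) * r) = f (a * (a ^ m * r)) := by ring_nf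
      _ ≤ c * f (a ^ m * r) := h _ (by positivity)
      _ ≤ c * (c ^ m * f r) := mul_le_mul_of_nonneg_left ih hc
      _ = c ^ (m + 1) * f r := by ring

section ReverseHolder

variable {α : Type*} [MeasurableSpace α] {μ : Measure α} {p q C : ℝ} {w : α → ℝ} {Q : Set α}

theorem setIntegral_le_of_rpow_average_le {E : Set α} (hpq : p.HolderConjugate q)
    (hwm : AEStronglyMeasurable w μ) (hw0 : ∀ᵐ y ∂μ, 0 ≤ w y)
    (hwp : IntegrableOn (fun y => w y ^ p) Q μ) (hQ : 0 < μ.real Q) (hEQ : E ⊆ Q)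
    (hRH : (⨍ y in Q, w y ^ p ∂μ) ^ (1 / p) ≤ C * ⨍ y in Q, w y ∂μ) :
    ∫ y in E, w y ∂μ ≤ C * (μ.real E / μ.real Q) ^ (1 / q) * ∫ y in Q, w y ∂μ := by
  have hQfin : μ Q ≠ ⊤ := (ENNReal.toReal_pos_iff.mp hQ).2.ne
  have : IsFiniteMeasure (μ.restrict E) :=
    isFiniteMeasure_restrict.mpr (measure_ne_top_of_subset hEQ hQfin)
  have hwp0 : ∀ᵐ y ∂μ, 0 ≤ w y ^ p := hw0.mono fun y hy => Real.rpow_nonneg hy p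
  have hwLp : MemLp w (ENNReal.ofReal p) (μ.restrict E) := by
    have hp0 : ENNReal.ofReal p ≠ 0 := ENNReal.ofReal_ne_zero_iff.mpr hpq.pos
    refine (integrable_norm_rpow_iff hwm.restrict hp0 ENNReal.ofReal_ne_top).mp ?_
    rw [ENNReal.toReal_ofReal hpq.nonneg]
    refine (hwp.mono_set hEQ).congr ?_
    filter_upwards [ae_restrict_of_ae hw0] with y hy
    rw [Real.norm_of_nonneg hy]
  have hHolder : ∫ y in E, w y ∂μ ≤ (∫ y in E, w y ^ p ∂μ) ^ (1 / p) * μ.real E ^ (1 / q) := by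
    simpa [Real.one_rpow, measureReal_def] using integral_mul_le_Lp_mul_Lq_of_nonneg hpq
      (ae_restrict_of_ae hw0) (Filter.Eventually.of_forall fun _ => zero_le_one) hwLp
      (memLp_const (1 : ℝ))
  have hEQp : ∫ y in E, w y ^ p ∂μ ≤ ∫ y in Q, w y ^ p ∂μ :=
    setIntegral_mono_set hwp (ae_restrict_of_ae hwp0) hEQ.eventuallyLE
  have hconj : μ.real Q ^ (1 / p) * μ.real Q ^ (1 / q) = μ.real Q := by
    rw [← Real.rpow_add hQ, one_div, one_div, hpq.inv_add_inv_eq_one, Real.rpow_one]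
  calc ∫ y in E, w y ∂μ
      ≤ (∫ y in Q, w y ^ p ∂μ) ^ (1 / p) * μ.real E ^ (1 / q) := by
        refine hHolder.trans (mul_le_mul_of_nonneg_right ?_ (Real.rpow_nonneg measureReal_nonneg _))
        exact Real.rpow_le_rpow (integral_nonneg_of_ae (ae_restrict_of_ae hwp0)) hEQp
          (one_div_nonneg.mpr hpq.nonneg)
    _ = μ.real Q ^ (1 / p) * (⨍ y in Q, w y ^ p ∂μ) ^ (1 / p) * μ.real E ^ (1 / q) := by
        rw [setAverage_eq, smul_eq_mul, ← Real.mul_rpow hQ.le, mul_inv_cancel_left₀ hQ.ne']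
        exact mul_nonneg (inv_nonneg.mpr hQ.le) (integral_nonneg_of_ae (ae_restrict_of_ae hwp0))
    _ ≤ μ.real Q ^ (1 / p) * (C * ⨍ y in Q, w y ∂μ) * μ.real E ^ (1 / q) := by gcongr
    _ = C * (μ.real E / μ.real Q) ^ (1 / q) * ∫ y in Q, w y ∂μ := by
        rw [setAverage_eq, smul_eq_mul, Real.div_rpow measureReal_nonneg hQ.le]
        field_simp
        linear_combination (C * (∫ y in Q, w y ∂μ) * μ.real E ^ (1 / q)) * hconj

theorem setIntegral_le_two_mul_of_rpow_average_le {S : Set α} (hpq : p.HolderConjugate q)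
    (hC : 0 < C) (hwm : AEStronglyMeasurable w μ) (hw0 : ∀ᵐ y ∂μ, 0 ≤ w y)
    (hw : IntegrableOn w Q μ) (hwp : IntegrableOn (fun y => w y ^ p) Q μ) (hQ : 0 < μ.real Q)
    (hSQ : S ⊆ Q) (hS : MeasurableSet S)
    (hRH : (⨍ y in Q, w y ^ p ∂μ) ^ (1 / p) ≤ C * ⨍ y in Q, w y ∂μ)
    (hshell : μ.real (Q \ S) ≤ (2 * C) ^ (-q) * μ.real Q) :
    ∫ y in Q, w y ∂μ ≤ 2 * ∫ y in S, w y ∂μ := by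
  have hratio : C * (μ.real (Q \ S) / μ.real Q) ^ (1 / q) ≤ 2⁻¹ :=
    calc C * (μ.real (Q \ S) / μ.real Q) ^ (1 / q)
        ≤ C * ((2 * C) ^ (-q)) ^ (1 / q) :=
          mul_le_mul_of_nonneg_left (Real.rpow_le_rpow (div_nonneg measureReal_nonneg hQ.le)
            ((div_le_iff₀ hQ).mpr hshell) (one_div_nonneg.mpr hpq.symm.nonneg)) hC.le
      _ = 2⁻¹ := by
          rw [← Real.rpow_mul (by positivity), neg_mul, mul_one_div_cancel hpq.symm.ne_zero,
            Real.rpow_neg_one]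
          field_simp
  have hshellInt :=
    setIntegral_le_of_rpow_average_le hpq hwm hw0 hwp hQ (Set.sdiff_subset (t := S)) hRH
  rw [setIntegral_sdiff hS hw hSQ] at hshellInt
  have hQw : 0 ≤ ∫ y in Q, w y ∂μ := integral_nonneg_of_ae (ae_restrict_of_ae hw0)
  linarith [mul_le_mul_of_nonneg_right hratio hQw]

end ReverseHolder

section Cubes

variable {n : ℕ}

theorem cube_eq_pi (x : Fin n → ℝ) (r : ℝ) :
    cube x r = Set.univ.pi fun i => Set.Ioo (x i - r) (x i + r) := by
  ext y
  simp only [cube, Set.mem_ofPred_eq, Set.mem_univ_pi, Set.mem_Ioo, abs_lt]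
  exact forall_congr' fun i => by constructor <;> rintro ⟨h₁, h₂⟩ <;> constructor <;> linarith

theorem measurableSet_cube (x : Fin n → ℝ) (r : ℝ) : MeasurableSet (cube x r) := by
  rw [cube_eq_pi]
  exact MeasurableSet.univ_pi fun _ => measurableSet_Ioo

theorem cube_mono (x : Fin n → ℝ) {r s : ℝ} (h : r ≤ s) : cube x r ⊆ cube x s :=
  fun _ hy i => (hy i).trans_le h

theorem volume_cube (x : Fin n → ℝ) {r : ℝ} (hr : 0 ≤ r) :
    volume (cube x r) = ENNReal.ofReal ((2 * r) ^ n) := by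
  simp only [cube_eq_pi, volume_pi_pi, Real.volume_Ioo, add_sub_sub_cancel, ← two_mul,
    Finset.prod_const, Finset.card_univ, Fintype.card_fin,
    ENNReal.ofReal_pow (by positivity : 0 ≤ 2 * r)]

theorem volume_real_cube (x : Fin n → ℝ) {r : ℝ} (hr : 0 ≤ r) :
    volume.real (cube x r) = (2 * r) ^ n := by
  rw [measureReal_def, volume_cube x hr, ENNReal.toReal_ofReal (by positivity)]

theorem volume_real_cube_sdiff_le (x : Fin n → ℝ) {s δ : ℝ} (hs : 0 ≤ s) (hδ : 0 ≤ δ) :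
    volume.real (cube x ((1 + δ) * s) \ cube x s) ≤
      n * δ * volume.real (cube x ((1 + δ) * s)) := by
  have hsδ : s ≤ (1 + δ) * s := le_mul_of_one_le_left hs (by linarith)
  rw [measureReal_sdiff (cube_mono x hsδ) (measurableSet_cube x s)
    (by simp [volume_cube x (hs.trans hsδ)]), volume_real_cube x hs,
    volume_real_cube x (hs.trans hsδ), mul_left_comm]
  exact pow_sub_pow_le_mul_pow (by positivity) (by nlinarith) (by nlinarith) n

end Cubes

section QuadraticForm

variable {d : ℕ}

theorem qf_eq_sum (A : Matrix (Fin d) (Fin d) ℝ) (e : Fin d → ℝ) :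
    qf A e = ∑ i, ∑ j, e i * A i j * e j := by
  simp [qf, dotProduct, Matrix.mulVec, Finset.mul_sum, mul_assoc]

theorem qf_smul (c : ℝ) (A : Matrix (Fin d) (Fin d) ℝ) (e : Fin d → ℝ) :
    qf (c • A) e = c * qf A e := by
  simp [qf, Matrix.smul_mulVec]

theorem Matrix.PosSemidef.qf_nonneg {A : Matrix (Fin d) (Fin d) ℝ} (hA : A.PosSemidef)
    (e : Fin d → ℝ) : 0 ≤ qf A e := by
  simpa [qf] using hA.dotProduct_mulVec_nonneg e

theorem matOpNorm_bddAbove (A : Matrix (Fin d) (Fin d) ℝ) :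
    BddAbove {t : ℝ | ∃ e : Fin d → ℝ, vnormSq e = 1 ∧ t = Real.sqrt (vnormSq (A.mulVec e))} := by
  refine ⟨Real.sqrt (∑ i, ∑ j, A i j ^ 2), ?_⟩
  rintro t ⟨e, he, rfl⟩
  refine Real.sqrt_le_sqrt ?_
  calc vnormSq (A.mulVec e) = ∑ i, (∑ j, A i j * e j) ^ 2 := by
        simp [vnormSq, Matrix.mulVec, dotProduct]
    _ ≤ ∑ i, (∑ j, A i j ^ 2) * ∑ j, e j ^ 2 :=
        Finset.sum_le_sum fun i _ => Finset.sum_mul_sq_le_sq_mul_sq _ _ _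
    _ = ∑ i, ∑ j, A i j ^ 2 := by rw [show ∑ j, e j ^ 2 = 1 from he]; simp

theorem abs_apply_le_matOpNorm (A : Matrix (Fin d) (Fin d) ℝ) (i j : Fin d) :
    |A i j| ≤ matOpNorm A := by
  have hcol : vnormSq (A.mulVec (Pi.single j 1)) = ∑ k, A k j ^ 2 := by
    simp [vnormSq]
  have hunit : vnormSq (Pi.single j (1 : ℝ)) = 1 := by
    simp [vnormSq, Pi.single_apply, apply_ite (· ^ 2)]
  refine le_csSup_of_le (matOpNorm_bddAbove A) ⟨Pi.single j 1, hunit, rfl⟩ ?_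
  rw [← Real.sqrt_sq_eq_abs, hcol]
  exact Real.sqrt_le_sqrt
    (Finset.single_le_sum (f := fun k => A k j ^ 2) (fun k _ => sq_nonneg _) (Finset.mem_univ i))

theorem matOpNorm_nonneg (A : Matrix (Fin d) (Fin d) ℝ) : 0 ≤ matOpNorm A :=
  Real.sSup_nonneg fun _ ⟨_, _, ht⟩ => ht ▸ Real.sqrt_nonneg _

theorem abs_qf_le (A : Matrix (Fin d) (Fin d) ℝ) (e : Fin d → ℝ) :
    |qf A e| ≤ (∑ i, |e i|) ^ 2 * matOpNorm A := by
  rw [qf_eq_sum]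
  calc |∑ i, ∑ j, e i * A i j * e j| ≤ ∑ i, ∑ j, |e i| * matOpNorm A * |e j| := by
        refine (Finset.abs_sum_le_sum_abs _ _).trans (Finset.sum_le_sum fun i _ =>
          (Finset.abs_sum_le_sum_abs _ _).trans (Finset.sum_le_sum fun j _ => ?_))
        rw [abs_mul, abs_mul]
        gcongr
        exact abs_apply_le_matOpNorm A i j
    _ = (∑ i, |e i|) ^ 2 * matOpNorm A := by
        simp only [sq, Finset.sum_mul, Finset.mul_sum]
        exact Finset.sum_congr rfl fun i _ => Finset.sum_congr rfl fun j _ => by ring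

theorem Matrix.posSemidef_smul_sub_of_qf_le {A B : Matrix (Fin d) (Fin d) ℝ}
    (hA : A.IsHermitian) (hB : B.IsHermitian) {γ : ℝ} (h : ∀ e, qf B e ≤ γ * qf A e) :
    (γ • A - B).PosSemidef := by
  refine .of_dotProduct_mulVec_nonneg ((hA.smul (IsSelfAdjoint.all γ)).sub hB) fun e => ?_
  have hqf := h e
  simp only [qf] at hqf
  simp only [star_trivial, Matrix.sub_mulVec, Matrix.smul_mulVec, dotProduct_sub,
    dotProduct_smul, smul_eq_mul]
  linarith

end QuadraticForm

noncomputable def radiusIncrement (n : ℕ) (p C : ℝ) : ℝ :=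
  (2 * C) ^ (-p.conjExponent) / (n + 1)

theorem radiusIncrement_pos (n : ℕ) (p : ℝ) {C : ℝ} (hC : 0 < C) :
    0 < radiusIncrement n p C := by
  unfold radiusIncrement
  positivity

section MatrixWeight

variable {n d : ℕ} {V : (Fin n → ℝ) → Matrix (Fin d) (Fin d) ℝ}

theorem qf_matInt {s : Set (Fin n → ℝ)} (hV : ∀ i j, IntegrableOn (fun y => V y i j) s)
    (e : Fin d → ℝ) : qf (matInt V s) e = ∫ y in s, qf (V y) e := by
  have hint : ∀ i j, IntegrableOn (fun y => e i * V y i j * e j) s :=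
    fun i j => ((hV i j).const_mul _).mul_const _
  simp_rw [qf_eq_sum, matInt, Matrix.of_apply]
  rw [integral_finsetSum _ fun i _ => integrable_finsetSum _ fun j _ => hint i j]
  refine Finset.sum_congr rfl fun i _ => ?_
  rw [integral_finsetSum _ fun j _ => hint i j]
  exact Finset.sum_congr rfl fun j _ => by rw [integral_mul_const, integral_const_mul]

theorem matAvg_eq_smul_matInt (V : (Fin n → ℝ) → Matrix (Fin d) (Fin d) ℝ)
    (s : Set (Fin n → ℝ)) : matAvg V s = (volume.real s)⁻¹ • matInt V s := by
  ext i j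
  simp [matAvg, matInt, setAverage_eq]

namespace IsMatrixWeight

theorem measurable_qf (hV : IsMatrixWeight V) (e : Fin d → ℝ) :
    Measurable fun y => qf (V y) e := by
  simp_rw [qf_eq_sum]
  exact Finset.measurable_sum _ fun i _ => Finset.measurable_sum _ fun j _ =>
    ((hV.1 i j).const_mul _).mul_const _

theorem ae_qf_nonneg (hV : IsMatrixWeight V) (e : Fin d → ℝ) : ∀ᵐ y, 0 ≤ qf (V y) e :=
  hV.2.1.mono fun _ hy => hy.qf_nonneg e

theorem integrableOn_apply (hV : IsMatrixWeight V) (x : Fin n → ℝ) {r : ℝ} (hr : 0 < r)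
    (i j : Fin d) : IntegrableOn (fun y => V y i j) (cube x r) :=
  (hV.2.2 x r hr).mono' (hV.1 i j).aestronglyMeasurable
    (Filter.Eventually.of_forall fun _ => abs_apply_le_matOpNorm _ i j)

theorem integrableOn_qf (hV : IsMatrixWeight V) (x : Fin n → ℝ) {r : ℝ} (hr : 0 < r)
    (e : Fin d → ℝ) : IntegrableOn (fun y => qf (V y) e) (cube x r) :=
  ((hV.2.2 x r hr).const_mul _).mono' (hV.measurable_qf e).aestronglyMeasurable
    (Filter.Eventually.of_forall fun _ => abs_qf_le _ e)

theorem qf_matInt_cube (hV : IsMatrixWeight V) (x : Fin n → ℝ) {r : ℝ} (hr : 0 < r)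
    (e : Fin d → ℝ) : qf (matInt V (cube x r)) e = ∫ y in cube x r, qf (V y) e :=
  qf_matInt (hV.integrableOn_apply x hr) e

theorem isHermitian_matInt (hV : IsMatrixWeight V) (s : Set (Fin n → ℝ)) :
    (matInt V s).IsHermitian := by
  ext i j
  simp only [Matrix.conjTranspose_apply, star_trivial, matInt, Matrix.of_apply]
  refine integral_congr_ae ?_
  filter_upwards [ae_restrict_of_ae hV.2.1] with y hy
  simpa using hy.1.apply i j

theorem setIntegral_qf_mono (hV : IsMatrixWeight V) (x : Fin n → ℝ) {r s : ℝ} (hr : 0 < r)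
    (hrs : r ≤ s) (e : Fin d → ℝ) : ∫ y in cube x r, qf (V y) e ≤ ∫ y in cube x s, qf (V y) e :=
  setIntegral_mono_set (hV.integrableOn_qf x (hr.trans_le hrs) e)
    (ae_restrict_of_ae (hV.ae_qf_nonneg e)) (cube_mono x hrs).eventuallyLE

end IsMatrixWeight

namespace MemBp

variable {p C : ℝ}

theorem integrableOn_qf_rpow (hB : MemBp p C V) (hV : IsMatrixWeight V) (hp : 0 ≤ p)
    (x : Fin n → ℝ) {r : ℝ} (hr : 0 < r) (e : Fin d → ℝ) :
    IntegrableOn (fun y => qf (V y) e ^ p) (cube x r) := by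
  refine ((hB.1 x r hr).const_mul (((∑ i, |e i|) ^ 2) ^ p)).mono'
    ((hV.measurable_qf e).pow_const p).aestronglyMeasurable ?_
  filter_upwards [ae_restrict_of_ae (hV.ae_qf_nonneg e)] with y hy
  rw [Real.norm_of_nonneg (Real.rpow_nonneg hy _), ← Real.mul_rpow (by positivity)
    (matOpNorm_nonneg _)]
  exact Real.rpow_le_rpow hy ((le_abs_self _).trans (abs_qf_le _ _)) hp

theorem rpow_average_qf_le (hB : MemBp p C V) (hV : IsMatrixWeight V) (x : Fin n → ℝ) {r : ℝ}
    (hr : 0 < r) (e : Fin d → ℝ) :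
    (⨍ y in cube x r, qf (V y) e ^ p) ^ (1 / p) ≤ C * ⨍ y in cube x r, qf (V y) e := by
  simpa only [matAvg_eq_smul_matInt, qf_smul, hV.qf_matInt_cube x hr, setAverage_eq,
    smul_eq_mul] using hB.2 x r hr e

theorem setIntegral_qf_cube_le_two_mul (hB : MemBp p C V) (hV : IsMatrixWeight V) (hp : 1 < p)
    (hC : 0 < C) (x : Fin n → ℝ) {s : ℝ} (hs : 0 < s) (e : Fin d → ℝ) :
    ∫ y in cube x ((1 + radiusIncrement n p C) * s), qf (V y) e ≤
      2 * ∫ y in cube x s, qf (V y) e := by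
  set δ := radiusIncrement n p C with hδ_def
  have hδ : 0 < δ := radiusIncrement_pos n p hC
  have hsρ : s ≤ (1 + δ) * s := le_mul_of_one_le_left hs.le (by linarith)
  have hρ : 0 < (1 + δ) * s := hs.trans_le hsρ
  refine setIntegral_le_two_mul_of_rpow_average_le (.conjExponent hp) hC
    (hV.measurable_qf e).aestronglyMeasurable (hV.ae_qf_nonneg e) (hV.integrableOn_qf x hρ e)
    (hB.integrableOn_qf_rpow hV (by linarith) x hρ e)
    (by rw [volume_real_cube x hρ.le]; positivity)
    (cube_mono x hsρ) (measurableSet_cube x s) (hB.rpow_average_qf_le hV x hρ e) ?_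
  have hnδ : n * δ ≤ (2 * C) ^ (-p.conjExponent) := by
    rw [hδ_def, radiusIncrement, mul_div_assoc', div_le_iff₀ (by positivity)]
    have hε : 0 ≤ (2 * C) ^ (-p.conjExponent) := by positivity
    nlinarith
  exact (volume_real_cube_sdiff_le x hs.le hδ.le).trans
    (mul_le_mul_of_nonneg_right hnδ measureReal_nonneg)

end MemBp

end MatrixWeight

theorem statement3_general (n : ℕ) (p C_V : ℝ) (hp : 1 < p) (hCV : 0 < C_V) :
    ∃ γ : ℝ, 0 < γ ∧ ∀ (d : ℕ), 1 ≤ d →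
      ∀ V : (Fin n → ℝ) → Matrix (Fin d) (Fin d) ℝ,
        IsMatrixWeight V → MemBp p C_V V →
        ∀ (x : Fin n → ℝ) (r : ℝ), 0 < r →
          (γ • matInt V (cube x r) - matInt V (cube x (2 * r))).PosSemidef := by
  set δ := radiusIncrement n p C_V
  have hδ : 0 < δ := radiusIncrement_pos n p hCV
  obtain ⟨m, hm⟩ := pow_unbounded_of_one_lt 2 (lt_add_of_pos_right 1 hδ)
  refine ⟨2 ^ m, by positivity, fun d _ V hV hB x r hr => ?_⟩
  refine Matrix.posSemidef_smul_sub_of_qf_le (hV.isHermitian_matInt _)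
    (hV.isHermitian_matInt _) fun e => ?_
  rw [hV.qf_matInt_cube x (by positivity) e, hV.qf_matInt_cube x hr e]
  calc ∫ y in cube x (2 * r), qf (V y) e
      ≤ ∫ y in cube x ((1 + δ) ^ m * r), qf (V y) e :=
        hV.setIntegral_qf_mono x (by positivity) (by nlinarith) e
    _ ≤ 2 ^ m * ∫ y in cube x r, qf (V y) e :=
        le_pow_mul_of_forall_le_mul (f := fun s => ∫ y in cube x s, qf (V y) e) (by linarith)
          zero_le_two (fun s hs => hB.setIntegral_qf_cube_le_two_mul hV hp hCV x hs e) hr m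

theorem statement3 (n : ℕ) (hn : 1 ≤ n) (p C_V : ℝ) (hp : 1 < p) (hCV : 0 < C_V) :
    ∃ γ : ℝ, 0 < γ ∧ ∀ (d : ℕ), 1 ≤ d →
      ∀ V : (Fin n → ℝ) → Matrix (Fin d) (Fin d) ℝ,
        IsMatrixWeight V → MemBp p C_V V →
        ∀ (x : Fin n → ℝ) (r : ℝ), 0 < r →
          (γ • matInt V (cube x r) - matInt V (cube x (2 * r))).PosSemidef :=
  statement3_general n p C_V hp hCV
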